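/- arXiv:2004.14063 — 4 statements merged into one kernel-verified Lean document; each statement's English description precedes it below -/
import Mathlib

section
/- Let δ be an expansion function on L, φ : L → L a function with φ(a) ≤ a for all a ∈ L, and q ∈ L a proper element. Then the following statements are equivalent: (1) q is φ-δ-primary; (2) for every a ∈ L with a ≰ δ(q), either (q : a) = q or (q : a) = (φ(q) : a); (3) for all compact elements r, s ∈ L, r·s ≤ q and r·s ≰ φ(q) imply s ≤ q or r ≤ δ(q). -/
open CompleteLattice

variable {L : Type*} [CompleteLattice L] [CommMonoid L]

/-- `L` is a compactly generated multiplicative lattice: multiplication distributes over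
arbitrary joins, the top element is the multiplicative identity, `1` is a compact element,
every element is a join of compact elements, and products of compact elements are compact. -/
def IsCGMultLattice (L : Type*) [CompleteLattice L] [CommMonoid L] : Prop :=
  (∀ (a : L) (S : Set L), a * sSup S = ⨆ b ∈ S, a * b) ∧
  ((1 : L) = ⊤) ∧
  IsCompactElement (1 : L) ∧
  (∀ a : L, a = sSup {x : L | IsCompactElement x ∧ x ≤ a}) ∧
  (∀ x y : L, IsCompactElement x → IsCompactElement y →
    IsCompactElement (x * y))

/-- An expansion function on `L`: `a ≤ δ a` and `δ` is monotone. -/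
def IsExpansion (δ : L → L) : Prop :=
  (∀ a : L, a ≤ δ a) ∧ ∀ a b : L, a ≤ b → δ a ≤ δ b

/-- A proper element `p` is `φ`-`δ`-primary if `a*b ≤ p` and `a*b ≰ φ p` imply
`a ≤ p` or `b ≤ δ p`. -/
def IsPhiDeltaPrimary (φ δ : L → L) (p : L) : Prop :=
  p < 1 ∧ ∀ a b : L, a * b ≤ p → ¬ a * b ≤ φ p → a ≤ p ∨ b ≤ δ p

/-- A proper element `p` is `δ`-primary if `a*b ≤ p` implies `a ≤ p` or `b ≤ δ p`. -/
def IsDeltaPrimary (δ : L → L) (p : L) : Prop :=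
  p < 1 ∧ ∀ a b : L, a * b ≤ p → a ≤ p ∨ b ≤ δ p

/-- A proper element `p` is `φ`-prime if `a*b ≤ p` and `a*b ≰ φ p` imply
`a ≤ p` or `b ≤ p`. -/
def IsPhiPrime (φ : L → L) (p : L) : Prop :=
  p < 1 ∧ ∀ a b : L, a * b ≤ p → ¬ a * b ≤ φ p → a ≤ p ∨ b ≤ p

/-- The residual `(a : b)`, the join of all `x` with `x * b ≤ a`. -/
def lres (a b : L) : L := sSup {x : L | x * b ≤ a}

/-- The radical `√a`, the join of all compact `x` with `x ^ n ≤ a` for some `n ≥ 1`. -/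
def lradical (a : L) : L :=
  sSup {x : L | IsCompactElement x ∧ ∃ n : ℕ, 0 < n ∧ x ^ n ≤ a}

/-- A principal element of a multiplicative lattice. -/
def IsPrincipalElem (e : L) : Prop :=
  ∀ a b : L, a ⊓ b * e = (lres a e ⊓ b) * e ∧ lres (a * e ⊔ b) e = lres b e ⊔ a

/-- A Noether lattice: modular, principally generated, satisfying the ascending
chain condition. -/
def IsNoetherLattice (L : Type*) [CompleteLattice L] [CommMonoid L] : Prop :=
  IsModularLattice L ∧ (∀ a : L, a = sSup {e : L | IsPrincipalElem e ∧ e ≤ a}) ∧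
  WellFoundedGT L

/-- A maximal element: proper, and `m < x ≤ 1` implies `x = 1`. -/
def IsMaximalElem (m : L) : Prop :=
  m < 1 ∧ ∀ x : L, m < x → x ≤ 1 → x = 1

/-!
The residual `(q : a)` is itself the largest `x` with `x * a ≤ q`, so applying the
`φ`-`δ`-primary condition to the single product `(q : a) * a` already decides between
`(q : a) = q` and `(q : a) = (φ q : a)`. For the compact criterion, a product `a * b` with
`a * b ≰ φ q` and `b ≰ δ q` contains compact witnesses `s₀ * r₀ ≰ φ q` and `r₁ ≰ δ q`;
enlarging any compact `s ≤ a` to `s ⊔ s₀` and `r₀` to `r₀ ⊔ r₁` keeps everything compact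
and lets the compact condition force `s ≤ q`.
-/

open Quantale

theorem CompleteLattice.IsCompactElement.sup {α : Type*} [CompleteLattice α] {x y : α}
    (hx : IsCompactElement x) (hy : IsCompactElement y) : IsCompactElement (x ⊔ y) := by
  classical
  simpa using isCompactElement_finsetSup (f := id) {x, y} (by simp [hx, hy])

namespace IsCGMultLattice

theorem isQuantale (hL : IsCGMultLattice L) : IsQuantale L where
  mul_sSup_distrib := hL.1
  sSup_mul_distrib s x := by simpa only [mul_comm _ x] using hL.1 x s

theorem isCompactlyGenerated (hL : IsCGMultLattice L) : IsCompactlyGenerated L :=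
  ⟨fun a => ⟨_, fun _ hx => hx.1, (hL.2.2.2.1 a).symm⟩⟩

end IsCGMultLattice

section Quantale

variable [IsQuantale L]

theorem le_lres_iff {a b x : L} : x ≤ lres a b ↔ x * b ≤ a :=
  leftMulResiduation_le_iff_mul_le

theorem lres_mul_le (a b : L) : lres a b * b ≤ a :=
  le_lres_iff.1 le_rfl

theorem lres_mono_left {a a' : L} (h : a ≤ a') (b : L) : lres a b ≤ lres a' b :=
  le_lres_iff.2 ((lres_mul_le a b).trans h)

theorem le_lres_self (h1 : (1 : L) = ⊤) (a b : L) : a ≤ lres a b :=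
  le_lres_iff.2 (mul_le_of_le_one_right' (h1 ▸ le_top))

theorem isPhiDeltaPrimary_iff_lres (h1 : (1 : L) = ⊤) {φ δ : L → L} {q : L} (hφ : φ q ≤ q)
    (hq : q < 1) :
    IsPhiDeltaPrimary φ δ q ↔
      ∀ a : L, ¬ a ≤ δ q → lres q a = q ∨ lres q a = lres (φ q) a := by
  refine ⟨fun hp a ha => ?_, fun h => ⟨hq, fun a b hab hφab => ?_⟩⟩
  · by_cases hφa : lres q a * a ≤ φ q
    · exact .inr (le_antisymm (le_lres_iff.2 hφa) (lres_mono_left hφ a))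
    · exact .inl (le_antisymm ((hp.2 _ a (lres_mul_le q a) hφa).resolve_right ha)
        (le_lres_self h1 q a))
  · by_cases hb : b ≤ δ q
    · exact .inr hb
    have ha : a ≤ lres q b := le_lres_iff.2 hab
    rcases h b hb with hres | hres
    · exact .inl (hres ▸ ha)
    · exact absurd (le_lres_iff.1 (hres ▸ ha)) hφab

variable [IsCompactlyGenerated L]

theorem mul_le_of_forall_compact {a b c : L}
    (h : ∀ s r : L, IsCompactElement s → IsCompactElement r → s ≤ a → r ≤ b → s * r ≤ c) :
    a * b ≤ c := by
  rw [← sSup_compact_le_eq a, ← sSup_compact_le_eq b, sSup_mul_distrib]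
  refine iSup₂_le fun s hs => ?_
  rw [mul_sSup_distrib]
  exact iSup₂_le fun r hr => h s r hs.1 hr.1 hs.2 hr.2

theorem isPhiDeltaPrimary_iff_compact {φ δ : L → L} {q : L} (hq : q < 1) :
    IsPhiDeltaPrimary φ δ q ↔
      ∀ r s : L, IsCompactElement r → IsCompactElement s →
        r * s ≤ q → ¬ r * s ≤ φ q → s ≤ q ∨ r ≤ δ q := by
  refine ⟨fun hp r s _ _ hrs hφrs => hp.2 s r (mul_comm r s ▸ hrs) (mul_comm r s ▸ hφrs),
    fun h => ⟨hq, fun a b hab hφab => ?_⟩⟩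
  by_cases hb : b ≤ δ q
  · exact .inr hb
  obtain ⟨r₁, hr₁, hr₁b, hr₁δ⟩ : ∃ r₁, IsCompactElement r₁ ∧ r₁ ≤ b ∧ ¬ r₁ ≤ δ q := by
    simpa using mt le_iff_compact_le_imp.2 hb
  obtain ⟨s₀, r₀, hs₀, hr₀, hs₀a, hr₀b, hφ₀⟩ : ∃ s₀ r₀, IsCompactElement s₀ ∧
      IsCompactElement r₀ ∧ s₀ ≤ a ∧ r₀ ≤ b ∧ ¬ s₀ * r₀ ≤ φ q := by
    simpa using mt mul_le_of_forall_compact hφab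
  refine .inl (le_iff_compact_le_imp.2 fun s hs hsa => ?_)
  have hrs : (r₀ ⊔ r₁) * (s ⊔ s₀) ≤ q := calc
    _ = (s ⊔ s₀) * (r₀ ⊔ r₁) := mul_comm _ _
    _ ≤ a * b := mul_le_mul' (sup_le hsa hs₀a) (sup_le hr₀b hr₁b)
    _ ≤ q := hab
  have hφrs : ¬ (r₀ ⊔ r₁) * (s ⊔ s₀) ≤ φ q := fun hle =>
    hφ₀ (((mul_le_mul' le_sup_right le_sup_left).trans_eq (mul_comm _ _)).trans hle)
  rcases h _ _ (hr₀.sup hr₁) (hs.sup hs₀) hrs hφrs with hsq | hrδ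
  · exact le_sup_left.trans hsq
  · exact absurd (le_sup_right.trans hrδ) hr₁δ

end Quantale

theorem phiDeltaPrimary_characterizations_general (hL : IsCGMultLattice L)
    (δ φ : L → L) (hφ : ∀ a : L, φ a ≤ a)
    (q : L) (hq : q < 1) :
    (IsPhiDeltaPrimary φ δ q ↔
      ∀ a : L, ¬ a ≤ δ q → lres q a = q ∨ lres q a = lres (φ q) a) ∧
    (IsPhiDeltaPrimary φ δ q ↔
      ∀ r s : L, IsCompactElement r → IsCompactElement s →
        r * s ≤ q → ¬ r * s ≤ φ q → s ≤ q ∨ r ≤ δ q) := by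
  have := hL.isQuantale
  have := hL.isCompactlyGenerated
  exact ⟨isPhiDeltaPrimary_iff_lres hL.2.1 (hφ q) hq, isPhiDeltaPrimary_iff_compact hq⟩

theorem phiDeltaPrimary_characterizations (hL : IsCGMultLattice L)
    (δ φ : L → L) (hδ : IsExpansion δ) (hφ : ∀ a : L, φ a ≤ a)
    (q : L) (hq : q < 1) :
    (IsPhiDeltaPrimary φ δ q ↔
      ∀ a : L, ¬ a ≤ δ q → lres q a = q ∨ lres q a = lres (φ q) a) ∧
    (IsPhiDeltaPrimary φ δ q ↔
      ∀ r s : L, IsCompactElement r → IsCompactElement s →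
        r * s ≤ q → ¬ r * s ≤ φ q → s ≤ q ∨ r ≤ δ q) :=
  phiDeltaPrimary_characterizations_general hL δ φ hφ q hq
end

section
/- Suppose L is additionally a Noether lattice. Let q ∈ L be a proper element with q ≠ 0 which is non-nilpotent (qⁿ ≠ 0 for all positive integers n) and which satisfies the restricted cancellation law (for all b, c ∈ L, q·b = q·c ≠ 0 implies b = c). Let δ be an expansion function on L and let φ : L → L be a function with φ(a) ≤ a for all a ∈ L and φ(a) ≤ aⁿ for all a ∈ L and all integers n ≥ 2. Then q is φ-δ-primary if and only if q is δ-primary. -/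
open CompleteLattice

variable {L : Type*} [CompleteLattice L] [CommMonoid L]

/-!
Given `a * b ≤ q`, apply `φ`-`δ`-primality to `a * (b ⊔ q) ≤ q` instead. Either
`a * (b ⊔ q) ≰ φ q` and we conclude directly, or `q * a ≤ a * (b ⊔ q) ≤ φ q ≤ q * q`, and the
restricted cancellation law (usable since `q * q ≠ 0`) turns this into `a ≤ q`.
-/

theorem IsCGMultLattice.mul_sup (hL : IsCGMultLattice L) (a x y : L) :
    a * (x ⊔ y) = a * x ⊔ a * y := by
  simpa [iSup_or, iSup_sup_eq] using hL.1 a {x, y}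

theorem IsCGMultLattice.mul_le_mul_left (hL : IsCGMultLattice L) (a : L) {x y : L}
    (hxy : x ≤ y) : a * x ≤ a * y :=
  calc a * x ≤ a * x ⊔ a * y := le_sup_left
    _ = a * y := by rw [← hL.mul_sup, sup_eq_right.2 hxy]

theorem IsCGMultLattice.mul_le_left (hL : IsCGMultLattice L) (a b : L) : a * b ≤ a := by
  simpa using hL.mul_le_mul_left a (hL.2.1 ▸ le_top : b ≤ 1)

theorem IsCGMultLattice.le_of_mul_le_mul_of_cancel (hL : IsCGMultLattice L) {q a c : L}
    (hcancel : ∀ b c : L, q * b = q * c → q * b ≠ ⊥ → b = c) (hc : q * c ≠ ⊥)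
    (h : q * a ≤ q * c) : a ≤ c := by
  have hsup : q * (a ⊔ c) = q * c := by rw [hL.mul_sup, sup_eq_right.2 h]
  exact sup_eq_right.1 (hcancel _ _ hsup (hsup ▸ hc))

theorem IsDeltaPrimary.isPhiDeltaPrimary {δ : L → L} {p : L} (φ : L → L)
    (h : IsDeltaPrimary δ p) : IsPhiDeltaPrimary φ δ p :=
  ⟨h.1, fun a b hab _ => h.2 a b hab⟩

theorem IsPhiDeltaPrimary.isDeltaPrimary_of_cancel (hL : IsCGMultLattice L) {φ δ : L → L}
    {q : L} (hq2 : q ^ 2 ≠ ⊥) (hcancel : ∀ b c : L, q * b = q * c → q * b ≠ ⊥ → b = c)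
    (hφ : φ q ≤ q ^ 2) (h : IsPhiDeltaPrimary φ δ q) : IsDeltaPrimary δ q := by
  refine ⟨h.1, fun a b hab => ?_⟩
  by_cases hφab : a * (b ⊔ q) ≤ φ q
  · refine .inl (hL.le_of_mul_le_mul_of_cancel hcancel (by rwa [← sq]) ?_)
    calc q * a = a * q := mul_comm q a
      _ ≤ a * (b ⊔ q) := hL.mul_le_mul_left a le_sup_right
      _ ≤ φ q := hφab
      _ ≤ q ^ 2 := hφ
      _ = q * q := sq q
  · have hle : a * (b ⊔ q) ≤ q := by
      rw [hL.mul_sup, mul_comm a q]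
      exact sup_le hab (hL.mul_le_left q a)
    exact (h.2 a _ hle hφab).imp id le_sup_left.trans

theorem restricted_cancellation_phi_iff_delta_general (hL : IsCGMultLattice L)
    (q : L)
    (hnil : ∀ n : ℕ, 0 < n → q ^ n ≠ ⊥)
    (hcancel : ∀ b c : L, q * b = q * c → q * b ≠ ⊥ → b = c)
    (δ : L → L)
    (φ : L → L)
    (hφn : ∀ (a : L) (n : ℕ), 2 ≤ n → φ a ≤ a ^ n) :
    IsPhiDeltaPrimary φ δ q ↔ IsDeltaPrimary δ q :=
  ⟨IsPhiDeltaPrimary.isDeltaPrimary_of_cancel hL (hnil 2 two_pos) hcancel (hφn q 2 le_rfl),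
    IsDeltaPrimary.isPhiDeltaPrimary φ⟩

theorem restricted_cancellation_phi_iff_delta (hL : IsCGMultLattice L)
    (hN : IsNoetherLattice L) (q : L) (hq : q < 1) (hq0 : q ≠ ⊥)
    (hnil : ∀ n : ℕ, 0 < n → q ^ n ≠ ⊥)
    (hcancel : ∀ b c : L, q * b = q * c → q * b ≠ ⊥ → b = c)
    (δ : L → L) (hδ : IsExpansion δ)
    (φ : L → L) (hφ : ∀ a : L, φ a ≤ a)
    (hφn : ∀ (a : L) (n : ℕ), 2 ≤ n → φ a ≤ a ^ n) :
    IsPhiDeltaPrimary φ δ q ↔ IsDeltaPrimary δ q :=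
  restricted_cancellation_phi_iff_delta_general hL q hnil hcancel δ φ hφn
end

section
/- Let δ be an expansion function on L and φ : L → L a function with φ(a) ≤ a for all a ∈ L. If a proper element q ∈ L is φ-δ-primary and q² ≰ φ(q), then q is δ-primary. -/
open CompleteLattice

variable {L : Type*} [CompleteLattice L] [CommMonoid L]

/-! If `a * b ≤ φ q`, enlarge `a` and `b` to `a ⊔ q` and `b ⊔ q`: their product still lies
below `q`, but now contains `q ^ 2`, so it escapes `φ q` and the `φ`-`δ`-primary condition
applies to it. -/

namespace IsCGMultLattice

theorem mul_sup_s12 (hL : IsCGMultLattice L) (c x y : L) : c * (x ⊔ y) = c * x ⊔ c * y := by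
  simpa [sSup_pair, iSup_or, iSup_sup_eq] using hL.1 c {x, y}

theorem mul_le_mul_left_s12 (hL : IsCGMultLattice L) {x y : L} (h : x ≤ y) (c : L) :
    c * x ≤ c * y := by
  rw [← sup_eq_right, ← hL.mul_sup_s12, sup_eq_right.mpr h]

theorem mul_le_right (hL : IsCGMultLattice L) (x q : L) : x * q ≤ q :=
  calc x * q = q * x := mul_comm x q
    _ ≤ q * 1 := hL.mul_le_mul_left_s12 (hL.2.1 ▸ le_top) q
    _ = q := mul_one q

theorem sup_mul_sup_le (hL : IsCGMultLattice L) {a b q : L} (hab : a * b ≤ q) :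
    (a ⊔ q) * (b ⊔ q) ≤ q := by
  rw [hL.mul_sup_s12, mul_comm _ b, mul_comm _ q, hL.mul_sup_s12, hL.mul_sup_s12]
  exact sup_le (sup_le (mul_comm a b ▸ hab) (hL.mul_le_right b q))
    (sup_le (mul_comm a q ▸ hL.mul_le_right a q) (hL.mul_le_right q q))

theorem sq_le_sup_mul_sup (hL : IsCGMultLattice L) (a b q : L) :
    q ^ 2 ≤ (a ⊔ q) * (b ⊔ q) :=
  calc q ^ 2 = q * q := sq q
    _ ≤ q * (b ⊔ q) := hL.mul_le_mul_left_s12 le_sup_right q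
    _ = (b ⊔ q) * q := mul_comm _ _
    _ ≤ (b ⊔ q) * (a ⊔ q) := hL.mul_le_mul_left_s12 le_sup_right _
    _ = (a ⊔ q) * (b ⊔ q) := mul_comm _ _

end IsCGMultLattice

theorem sq_not_le_phi_implies_delta_primary_general (hL : IsCGMultLattice L)
    (δ φ : L → L)
    (q : L) (hq : IsPhiDeltaPrimary φ δ q) (hsq : ¬ q ^ 2 ≤ φ q) :
    IsDeltaPrimary δ q := by
  refine ⟨hq.1, fun a b hab => ?_⟩
  by_cases hφab : a * b ≤ φ q
  · have hsup_not_le : ¬ (a ⊔ q) * (b ⊔ q) ≤ φ q :=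
      fun h => hsq ((hL.sq_le_sup_mul_sup a b q).trans h)
    exact (hq.2 _ _ (hL.sup_mul_sup_le hab) hsup_not_le).imp
      le_sup_left.trans le_sup_left.trans
  · exact hq.2 a b hab hφab

theorem sq_not_le_phi_implies_delta_primary (hL : IsCGMultLattice L)
    (δ φ : L → L) (hδ : IsExpansion δ) (hφ : ∀ a : L, φ a ≤ a)
    (q : L) (hq : IsPhiDeltaPrimary φ δ q) (hsq : ¬ q ^ 2 ≤ φ q) :
    IsDeltaPrimary δ q :=
  sq_not_le_phi_implies_delta_primary_general hL δ φ q hq hsq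
end

section
/- Let δ be an expansion function on L and φ : L → L a function with φ(a) ≤ a for all a ∈ L. If a proper element p ∈ L is φ-δ-primary and √(φ(p)) ≤ δ(p), then √p ≤ δ(p). -/
open CompleteLattice

variable {L : Type*} [CompleteLattice L] [CommMonoid L]

theorem le_lradical_of_pow_le {a x : L} (hx : IsCompactElement x) {n : ℕ} (hn : 0 < n)
    (hxn : x ^ n ≤ a) : x ≤ lradical a :=
  le_sSup ⟨hx, n, hn, hxn⟩

theorem IsPhiDeltaPrimary.le_delta_or_pow_le_phi {φ δ : L → L} {p : L}
    (hp : IsPhiDeltaPrimary φ δ p) (hpδ : p ≤ δ p) {x : L} {n : ℕ} (hn : 0 < n)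
    (hxn : x ^ n ≤ p) : x ≤ δ p ∨ ∃ m, 0 < m ∧ x ^ m ≤ φ p := by
  induction n, hn using Nat.le_induction with
  | base => exact Or.inl ((pow_one x ▸ hxn).trans hpδ)
  | succ n hn ih =>
    by_cases hφ : x ^ (n + 1) ≤ φ p
    · exact Or.inr ⟨n + 1, n.succ_pos, hφ⟩
    rw [pow_succ] at hxn hφ
    rcases hp.2 _ _ hxn hφ with hxn' | hx
    · exact ih hxn'
    · exact Or.inl hx

theorem radical_le_delta_general
    (δ φ : L → L) (hδ : IsExpansion δ)
    (p : L) (hp : IsPhiDeltaPrimary φ δ p) (hrad : lradical (φ p) ≤ δ p) :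
    lradical p ≤ δ p := by
  refine sSup_le fun x ⟨hx, n, hn, hxn⟩ => ?_
  rcases hp.le_delta_or_pow_le_phi (hδ.1 p) hn hxn with hxδ | ⟨m, hm, hxm⟩
  · exact hxδ
  · exact (le_lradical_of_pow_le hx hm hxm).trans hrad

theorem radical_le_delta (hL : IsCGMultLattice L)
    (δ φ : L → L) (hδ : IsExpansion δ) (hφ : ∀ a : L, φ a ≤ a)
    (p : L) (hp : IsPhiDeltaPrimary φ δ p) (hrad : lradical (φ p) ≤ δ p) :
    lradical p ≤ δ p :=
  radical_le_delta_general δ φ hδ p hp hrad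
end
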